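/- arXiv:1011.6267 — 2 statements merged into one kernel-verified Lean document; each statement's English description precedes it below -/
import Mathlib

section
/- Let (G,T) be an instance of the multiway cut problem that has at least one multiway cut, and let t ∈ T. Then there exist a multiway cut S of (G,T) of minimum size and an important isolating cut K of t such that K ⊆ S. -/
variable {V : Type*}

/-- `K` is an `X`–`Y` separator of `G`: `K` avoids `X ∪ Y` and every walk
from a vertex of `X` to a vertex of `Y` meets `K` (i.e. there is no
`X`–`Y` path in `G \ K`). -/
def IsSeparator (G : SimpleGraph V) (X Y K : Set V) : Prop :=
  K ⊆ (X ∪ Y)ᶜ ∧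
  ∀ x ∈ X, ∀ y ∈ Y, ∀ w : G.Walk x y, ∃ v ∈ w.support, v ∈ K

/-- `NR G A B`: the vertices of `G \ B` that are not reachable from `A` in `G \ B`. -/
def NR (G : SimpleGraph V) (A B : Set V) : Set V :=
  {v | v ∉ B ∧ ¬ ∃ a ∈ A, ∃ w : G.Walk a v, ∀ x ∈ w.support, x ∉ B}

/-- `Reach G A B`: the vertices reachable from `A` in `G \ B`. -/
def Reach (G : SimpleGraph V) (A B : Set V) : Set V :=
  {v | ∃ a ∈ A, ∃ w : G.Walk a v, ∀ x ∈ w.support, x ∉ B}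

/-- The order on `X`–`Y` separators: `K1 ≤ K2` iff `NR(G,Y,K1) ⊆ NR(G,Y,K2)`. -/
def SepLE (G : SimpleGraph V) (Y K1 K2 : Set V) : Prop :=
  NR G Y K1 ⊆ NR G Y K2

/-- The strict order on `X`–`Y` separators. -/
def SepLT (G : SimpleGraph V) (Y K1 K2 : Set V) : Prop :=
  NR G Y K1 ⊆ NR G Y K2 ∧ NR G Y K1 ≠ NR G Y K2

/-- A minimal `X`–`Y` separator: no proper subset is an `X`–`Y` separator. -/
def IsMinimalSeparator (G : SimpleGraph V) (X Y K : Set V) : Prop :=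
  IsSeparator G X Y K ∧ ∀ K' ⊂ K, ¬ IsSeparator G X Y K'

/-- An important `X`–`Y` separator: a minimal separator `K` such that there is
no separator `K'` with `K < K'` and `|K'| ≤ |K|`. -/
def IsImportantSeparator (G : SimpleGraph V) (X Y K : Set V) : Prop :=
  IsMinimalSeparator G X Y K ∧
  ¬ ∃ K', IsSeparator G X Y K' ∧ SepLT G Y K K' ∧ K'.ncard ≤ K.ncard

/-- The minimum size of an `X`–`Y` separator of `G`. -/
noncomputable def minSepSize (G : SimpleGraph V) (X Y : Set V) : ℕ :=
  sInf {n | ∃ K, IsSeparator G X Y K ∧ K.ncard = n}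

/-- The excess of a separator: its size minus the minimum separator size. -/
noncomputable def excess (G : SimpleGraph V) (X Y K : Set V) : ℕ :=
  K.ncard - minSepSize G X Y

/-- The graph `Pr(G,X,Y,K)`: the vertices `NR(G,Y,K) \ X` are deleted (here:
made isolated), and every vertex of `X` is made adjacent to every vertex of `K`. -/
def PrGraph (G : SimpleGraph V) (X Y K : Set V) : SimpleGraph V where
  Adj u v := u ≠ v ∧ u ∉ NR G Y K \ X ∧ v ∉ NR G Y K \ X ∧
    (G.Adj u v ∨ (u ∈ X ∧ v ∈ K) ∨ (u ∈ K ∧ v ∈ X))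
  symm := by
    constructor
    rintro u v ⟨h1, h2, h3, h4⟩
    refine ⟨h1.symm, h3, h2, ?_⟩
    rcases h4 with h | h | h
    · exact Or.inl h.symm
    · exact Or.inr (Or.inr ⟨h.2, h.1⟩)
    · exact Or.inr (Or.inl ⟨h.2, h.1⟩)
  loopless := by constructor; rintro v ⟨h1, -⟩; exact h1 rfl

/-- `NSet G X` is `N(X)`: the set of vertices outside `X` adjacent to a vertex of `X`. -/
def NSet (G : SimpleGraph V) (X : Set V) : Set V :=
  {v | v ∉ X ∧ ∃ x ∈ X, G.Adj x v}

/-- `G` is `X`–`Y` normalized: `N(X)` is an `X`–`Y` separator and is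
the unique smallest `X`–`Y` separator. -/
def Normalized (G : SimpleGraph V) (X Y : Set V) : Prop :=
  IsSeparator G X Y (NSet G X) ∧
  ∀ K, IsSeparator G X Y K → K ≠ NSet G X → (NSet G X).ncard < K.ncard

/-- The cover excess `CE(S)`: the minimum excess of an `X`–`Y` separator disjoint from `S`. -/
noncomputable def CE (G : SimpleGraph V) (X Y S : Set V) : ℕ :=
  sInf {n | ∃ K, IsSeparator G X Y K ∧ Disjoint K S ∧ excess G X Y K = n}

/-- A witness of `S`: an `X`–`Y` separator disjoint from `S` whose excess equals `CE(S)`. -/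
noncomputable def IsWitness (G : SimpleGraph V) (X Y S K : Set V) : Prop :=
  IsSeparator G X Y K ∧ Disjoint K S ∧ excess G X Y K = CE G X Y S

/-- An important witness of `S`: a witness of `S` that is an important `X`–`Y` separator. -/
noncomputable def IsImportantWitness (G : SimpleGraph V) (X Y S K : Set V) : Prop :=
  IsWitness G X Y S K ∧ IsImportantSeparator G X Y K

/-- A multiway cut of `(G,T)`: a set `S` of non-terminal vertices such that in
`G \ S` no two terminals lie in the same connected component. -/
def IsMultiwayCut (G : SimpleGraph V) (T S : Set V) : Prop :=
  S ⊆ Tᶜ ∧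
  ∀ t1 ∈ T, ∀ t2 ∈ T, t1 ≠ t2 → ∀ w : G.Walk t1 t2, ∃ v ∈ w.support, v ∈ S

/-!
Take a minimum multiway cut `S` and let `B ⊆ S` be the vertices of `S` adjacent to the component
of `t` in `G \ S`; `B` isolates `t`. Replacing `B` by a smaller or dominating isolating cut as long
as possible ends in an important isolating cut `K` with `|K| ≤ |B|` whose side of `t` contains that
of `B`. Then `(S \ B) ∪ K` is still a multiway cut: a path between two terminals avoiding it meets
`S` only in `B`, so it passes through a vertex that `t` reaches in `G \ K`, and then `t` reaches a
second terminal in `G \ K`. Being no larger than `S`, it is a minimum multiway cut containing `K`.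
-/

section Reachability

variable {G : SimpleGraph V} {A B X Y K : Set V}

theorem notMem_of_mem_reach {v : V} (hv : v ∈ Reach G A B) : v ∉ B := by
  obtain ⟨a, -, w, hw⟩ := hv
  exact hw v w.end_mem_support

theorem reach_anti {B' : Set V} (h : B ⊆ B') : Reach G A B' ⊆ Reach G A B := by
  rintro v ⟨a, ha, w, hw⟩
  exact ⟨a, ha, w, fun x hx hxB => hw x hx (h hxB)⟩

theorem mem_reach_of_walk {u v : V} (hu : u ∈ Reach G A B) (p : G.Walk u v)
    (hp : ∀ x ∈ p.support, x ∉ B) : v ∈ Reach G A B := by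
  obtain ⟨a, ha, w, hw⟩ := hu
  refine ⟨a, ha, w.append p, fun x hx => ?_⟩
  rcases SimpleGraph.Walk.mem_support_append_iff _ _ |>.mp hx with hx | hx
  exacts [hw x hx, hp x hx]

theorem mem_reach_of_adj {u v : V} (hu : u ∈ Reach G A B) (hadj : G.Adj u v) (hv : v ∉ B) :
    v ∈ Reach G A B :=
  mem_reach_of_walk hu hadj.toWalk <| by
    simpa [SimpleGraph.Adj.toWalk] using ⟨notMem_of_mem_reach hu, hv⟩

theorem mem_reach_of_mem_support {a v u : V} (ha : a ∈ A) (w : G.Walk a v)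
    (hw : ∀ x ∈ w.support, x ∉ B) (hu : u ∈ w.support) : u ∈ Reach G A B := by
  classical
  exact ⟨a, ha, w.takeUntil u hu, fun x hx => hw x (w.support_takeUntil_subset_support hu hx)⟩

theorem endpoints_mem_reach {u v x : V} (p : G.Walk u v) (hp : ∀ y ∈ p.support, y ∉ B)
    (hx : x ∈ p.support) (hxR : x ∈ Reach G A B) : u ∈ Reach G A B ∧ v ∈ Reach G A B := by
  classical
  exact ⟨mem_reach_of_walk hxR (p.takeUntil x hx).reverse fun y hy =>
      hp y (p.support_takeUntil_subset_support hx (by simpa using hy)),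
    mem_reach_of_walk hxR (p.dropUntil x hx) fun y hy =>
      hp y (p.support_dropUntil_subset_support hx hy)⟩

theorem IsSeparator.notMem_reach (hK : IsSeparator G X Y K) {y : V} (hy : y ∈ Y) :
    y ∉ Reach G X K := by
  rintro ⟨x, hx, w, hw⟩
  obtain ⟨v, hv, hvK⟩ := hK.2 x hx y hy w
  exact hw v hv hvK

theorem IsSeparator.reach_subset_NR (hK : IsSeparator G X Y K) : Reach G X K ⊆ NR G Y K := by
  refine fun v hv => ⟨notMem_of_mem_reach hv, ?_⟩
  rintro ⟨y, hy, w, hw⟩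
  refine hK.notMem_reach hy (mem_reach_of_walk hv w.reverse fun x hx => hw x ?_)
  simpa using hx

theorem IsSeparator.reach_subset_of_sepLE {K' : Set V} (hK : IsSeparator G X Y K)
    (hle : SepLE G Y K K') : Reach G X K ⊆ Reach G X K' := by
  rintro v ⟨x, hx, w, hw⟩
  exact ⟨x, hx, w, fun u hu =>
    (hle (hK.reach_subset_NR (mem_reach_of_mem_support hx w hw hu))).1⟩

end Reachability

section ImportantSeparator

variable {G : SimpleGraph V} {X Y : Set V}

theorem exists_importantSeparator_reach_supset [Finite V] {K : Set V}
    (hK : IsSeparator G X Y K) :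
    ∃ K', IsImportantSeparator G X Y K' ∧ K'.ncard ≤ K.ncard ∧ Reach G X K ⊆ Reach G X K' := by
  by_cases hmin : ∃ K₀ ⊂ K, IsSeparator G X Y K₀
  · obtain ⟨K₀, hK₀K, hK₀⟩ := hmin
    obtain ⟨K', hK', hcard, hreach⟩ := exists_importantSeparator_reach_supset hK₀
    exact ⟨K', hK', hcard.trans (Set.ncard_le_ncard hK₀K.subset),
      (reach_anti hK₀K.subset).trans hreach⟩
  by_cases hdom : ∃ K₁, IsSeparator G X Y K₁ ∧ SepLT G Y K K₁ ∧ K₁.ncard ≤ K.ncard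
  · obtain ⟨K₁, hK₁, hlt, hK₁K⟩ := hdom
    obtain ⟨K', hK', hcard, hreach⟩ := exists_importantSeparator_reach_supset hK₁
    exact ⟨K', hK', hcard.trans hK₁K, (hK.reach_subset_of_sepLE hlt.1).trans hreach⟩
  exact ⟨K, ⟨⟨hK, fun K₀ hK₀K hK₀ => hmin ⟨K₀, hK₀K, hK₀⟩⟩, hdom⟩, le_rfl, subset_rfl⟩
termination_by (K.ncard, (NR G Y K)ᶜ.ncard)
decreasing_by
  · exact Prod.Lex.left _ _ (Set.ncard_lt_ncard hK₀K)
  · rcases hK₁K.lt_or_eq with hlt' | heq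
    · exact Prod.Lex.left _ _ hlt'
    · rw [heq]
      exact Prod.Lex.right _ <| Set.ncard_lt_ncard <|
        compl_lt_compl_iff_lt.mpr (Set.ssubset_iff_subset_ne.mpr hlt)

end ImportantSeparator

section Boundary

variable {G : SimpleGraph V} {A X Y S : Set V}

def reachBoundary (G : SimpleGraph V) (A S : Set V) : Set V :=
  {v | v ∈ S ∧ ∃ r ∈ Reach G A S, G.Adj r v}

theorem reachBoundary_subset : reachBoundary G A S ⊆ S := fun _ hv => hv.1

theorem IsSeparator.reachBoundary (hS : IsSeparator G X Y S) :
    IsSeparator G X Y (reachBoundary G X S) := by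
  refine ⟨reachBoundary_subset.trans hS.1, fun x hx y hy w => ?_⟩
  have hxS : x ∉ S := fun h => hS.1 h (Or.inl hx)
  have hxR : x ∈ Reach G X S :=
    ⟨x, hx, .nil, by simpa using hxS⟩
  obtain ⟨d, hd, hfst, hsnd⟩ := w.exists_boundary_dart _ hxR (hS.notMem_reach hy)
  have hsndS : d.snd ∈ S := by
    by_contra h
    exact hsnd (mem_reach_of_adj hfst d.adj h)
  exact ⟨d.snd, w.dart_snd_mem_support_of_mem_darts hd, hsndS, d.fst, hfst, d.adj⟩

end Boundary

section MultiwayCut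

variable {G : SimpleGraph V} {T S : Set V} {t : V}

theorem IsMultiwayCut.isSeparator (hS : IsMultiwayCut G T S) (ht : t ∈ T) :
    IsSeparator G {t} (T \ {t}) S := by
  refine ⟨fun v hv hvT => hS.1 hv ?_, ?_⟩
  · rw [Set.union_sdiff_self] at hvT
    exact hvT.elim (· ▸ ht) id
  · rintro x rfl y ⟨hyT, hyt⟩ w
    exact hS.2 x ht y hyT (Ne.symm hyt) w

theorem IsMultiwayCut.diff_reachBoundary_union {K : Set V} (hS : IsMultiwayCut G T S)
    (hK : IsSeparator G {t} (T \ {t}) K) (hreach : Reach G {t} S ⊆ Reach G {t} K) :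
    IsMultiwayCut G T (S \ reachBoundary G {t} S ∪ K) := by
  refine ⟨Set.union_subset (Set.sdiff_subset.trans hS.1) fun v hv hvT =>
    hK.1 hv (by rw [Set.union_sdiff_self]; exact Or.inr hvT), fun t₁ ht₁ t₂ ht₂ hne w => ?_⟩
  by_contra! hw
  obtain ⟨v, hvw, hvS⟩ := hS.2 t₁ ht₁ t₂ ht₂ hne w
  have hvB : v ∈ reachBoundary G {t} S := by
    by_contra h
    exact hw v hvw (Or.inl ⟨hvS, h⟩)
  obtain ⟨-, r, hr, hrv⟩ := hvB
  have hwK : ∀ x ∈ w.support, x ∉ K := fun x hx h => hw x hx (Or.inr h)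
  have hvK : v ∈ Reach G {t} K := mem_reach_of_adj (hreach hr) hrv (hwK v hvw)
  obtain ⟨ht₁K, ht₂K⟩ := endpoints_mem_reach w hwK hvw hvK
  rcases eq_or_ne t₁ t with rfl | ht₁t
  · exact hK.notMem_reach ⟨ht₂, hne.symm⟩ ht₂K
  · exact hK.notMem_reach ⟨ht₁, ht₁t⟩ ht₁K

end MultiwayCut

/-- Let `(G,T)` be an instance of the multiway cut problem
having at least one multiway cut and let `t ∈ T`.  Then there exist a multiway
cut `S` of `(G,T)` of minimum size and an important isolating cut `K` of `t`
(an important `{t}`–`(T \ {t})` separator) such that `K ⊆ S`. -/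
theorem exists_optimal_multiwayCut_containing_important_isolating_cut
    {V : Type*} [Fintype V] (G : SimpleGraph V) (T : Set V)
    (hex : ∃ S, IsMultiwayCut G T S) (t : V) (ht : t ∈ T) :
    ∃ S K : Set V,
      IsMultiwayCut G T S ∧
      (∀ S', IsMultiwayCut G T S' → S.ncard ≤ S'.ncard) ∧
      IsImportantSeparator G {t} (T \ {t}) K ∧
      K ⊆ S := by
  obtain ⟨S, hS, hSmin⟩ :=
    Set.exists_min_image {S | IsMultiwayCut G T S} Set.ncard (Set.toFinite _) hex
  obtain ⟨K, hK, hKB, hreach⟩ :=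
    exists_importantSeparator_reach_supset (hS.isSeparator ht).reachBoundary
  set B := reachBoundary G {t} S
  have hBS : B ⊆ S := reachBoundary_subset
  have hcard : (S \ B ∪ K).ncard ≤ S.ncard :=
    calc (S \ B ∪ K).ncard ≤ (S \ B).ncard + K.ncard := Set.ncard_union_le _ _
      _ = S.ncard - B.ncard + K.ncard := by rw [Set.ncard_sdiff hBS]
      _ ≤ S.ncard := by have := Set.ncard_le_ncard hBS; omega
  exact ⟨S \ B ∪ K, K, hS.diff_reachBoundary_union hK.1.1 ((reach_anti hBS).trans hreach),
    fun S' hS' => hcard.trans (hSmin S' hS'), hK, Set.subset_union_right⟩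
end

section
/- Let G be an X–Y normalized graph. If (S1,…,Sr) and (S1',…,Sq') are both attributes of compound witnesses with respect to X, Y in G, and S1 ∪ … ∪ Sr = S1' ∪ … ∪ Sq', then the two sequences coincide, i.e., r = q and Si = Si' for every i. -/
variable {V : Type*}

/-- Compound witnesses: `K` is a compound witness with attribute `(S1, …, Sr)`
(a list of sets) w.r.t. `X`, `Y` in `G`.  For `r = 1`: `S1 ⊆ N(X)`, no vertex of
`S1` is adjacent to `Y`, and `K` is the (unique) important witness of `S1`.
For `r > 1`: additionally `S2 ∪ … ∪ Sr` is disjoint from `N(X)` and `K` is a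
compound witness with attribute `(S2, …, Sr)` w.r.t. `X`, `Y` in `Pr(G,X,Y,K(S1))`. -/
inductive IsCompoundWitness (X Y : Set V) :
    SimpleGraph V → List (Set V) → Set V → Prop where
  | base (G : SimpleGraph V) (S1 K : Set V) :
      S1.Nonempty → S1 ⊆ NSet G X → (∀ s ∈ S1, ∀ y ∈ Y, ¬ G.Adj s y) →
      IsImportantWitness G X Y S1 K →
      IsCompoundWitness X Y G [S1] K
  | step (G : SimpleGraph V) (S1 : Set V) (rest : List (Set V)) (K K1 : Set V) :
      S1.Nonempty → S1 ⊆ NSet G X → (∀ s ∈ S1, ∀ y ∈ Y, ¬ G.Adj s y) →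
      rest ≠ [] → (∀ S ∈ rest, Disjoint S (NSet G X)) →
      IsImportantWitness G X Y S1 K1 →
      IsCompoundWitness X Y (PrGraph G X Y K1) rest K →
      IsCompoundWitness X Y G (S1 :: rest) K

/-
The union of an attribute `(S₁, …, S_r)` meets `N(X)` exactly in `S₁`, since `S₁ ⊆ N(X)` and the
later sets avoid `N(X)`; so the union determines `S₁` and the union of the tail. The head in turn
determines its important witness `K(S₁)`: if `K` and `K'` are important witnesses of `S₁` with
`X`-sides `R` and `R'`, then `N(R ∩ R')` is a separator avoiding `S₁`, so it is at least as large as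
either witness, and submodularity of the vertex boundary makes `N(R ∪ R')` at most as large as
either; importance then forces `K = N(R ∪ R') = K'`. Hence both tails are attributes of compound
witnesses in the same graph `Pr(G,X,Y,K(S₁))`, and induction on the attribute finishes.
-/

theorem Set.eq_and_eq_of_union_eq_union {α : Type*} {S S' U U' N : Set α} (hS : S ⊆ N)
    (hS' : S' ⊆ N) (hU : Disjoint U N) (hU' : Disjoint U' N) (h : S ∪ U = S' ∪ U') :
    S = S' ∧ U = U' := by
  have split : ∀ {S U : Set α}, S ⊆ N → Disjoint U N → (S ∪ U) ∩ N = S ∧ (S ∪ U) \ N = U :=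
    fun hS hU => by
      simp [Set.union_inter_distrib_right, Set.inter_eq_left.2 hS, hU.inter_eq,
        Set.union_sdiff_distrib, Set.sdiff_eq_empty.2 hS, hU.sdiff_eq_left]
  constructor
  · rw [← (split hS hU).1, h, (split hS' hU').1]
  · rw [← (split hS hU).2, h, (split hS' hU').2]

section Boundary

variable {G : SimpleGraph V} {A B : Set V}

theorem NSet_union_subset : NSet G (A ∪ B) ⊆ NSet G A ∪ NSet G B := by
  rintro v ⟨hv, u, hu | hu, huv⟩
  · exact Or.inl ⟨fun h => hv (Or.inl h), u, hu, huv⟩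
  · exact Or.inr ⟨fun h => hv (Or.inr h), u, hu, huv⟩

theorem NSet_inter_subset : NSet G (A ∩ B) ⊆ NSet G A ∪ NSet G B := by
  rintro v ⟨hv, u, ⟨huA, huB⟩, huv⟩
  by_cases hvA : v ∈ A
  · exact Or.inr ⟨fun hvB => hv ⟨hvA, hvB⟩, u, huB, huv⟩
  · exact Or.inl ⟨hvA, u, huA, huv⟩

theorem NSet_union_inter_NSet_inter_subset :
    NSet G (A ∪ B) ∩ NSet G (A ∩ B) ⊆ NSet G A ∩ NSet G B := by
  rintro v ⟨⟨hv, -⟩, -, u, ⟨huA, huB⟩, huv⟩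
  exact ⟨⟨fun h => hv (Or.inl h), u, huA, huv⟩, ⟨fun h => hv (Or.inr h), u, huB, huv⟩⟩

theorem ncard_NSet_union_add_ncard_NSet_inter_le [Finite V] (G : SimpleGraph V) (A B : Set V) :
    (NSet G (A ∪ B)).ncard + (NSet G (A ∩ B)).ncard ≤ (NSet G A).ncard + (NSet G B).ncard := by
  rw [← Set.ncard_union_add_ncard_inter (NSet G (A ∪ B)),
    ← Set.ncard_union_add_ncard_inter (NSet G A)]
  exact add_le_add (Set.ncard_le_ncard (Set.union_subset NSet_union_subset NSet_inter_subset))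
    (Set.ncard_le_ncard NSet_union_inter_NSet_inter_subset)

theorem disjoint_NSet_self : Disjoint (NSet G A) A :=
  Set.disjoint_left.2 fun _ hv => hv.1

theorem SimpleGraph.Walk.exists_mem_support_NSet {a b : V} (w : G.Walk a b) (ha : a ∈ A)
    (hb : b ∉ A) : ∃ v ∈ w.support, v ∈ NSet G A := by
  obtain ⟨d, hd, hdA, hdA'⟩ := w.exists_boundary_dart A ha hb
  exact ⟨d.snd, w.dart_snd_mem_support_of_mem_darts hd, hdA', d.fst, hdA, d.adj⟩

theorem isSeparator_NSet {X Y : Set V} (hXA : X ⊆ A) (hAY : Disjoint A Y)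
    (hNY : Disjoint (NSet G A) Y) : IsSeparator G X Y (NSet G A) := by
  refine ⟨fun v hv hvXY => ?_, fun x hx y hy w => ?_⟩
  · rcases hvXY with hvX | hvY
    · exact hv.1 (hXA hvX)
    · exact Set.disjoint_left.1 hNY hv hvY
  · exact w.exists_mem_support_NSet (hXA hx) (Set.disjoint_right.1 hAY hy)

end Boundary

section NR

variable {G : SimpleGraph V} {X Y K : Set V}

theorem mem_NR_of_adj {u v : V} (hu : u ∈ NR G Y K) (huv : G.Adj u v) (hv : v ∉ K) :
    v ∈ NR G Y K := by
  refine ⟨hv, fun ⟨y, hy, w, hw⟩ => hu.2 ⟨y, hy, w.concat huv.symm, fun x hx => ?_⟩⟩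
  rw [SimpleGraph.Walk.support_concat, List.mem_append, List.mem_singleton] at hx
  rcases hx with hx | rfl
  · exact hw x hx
  · exact hu.1

theorem NSet_NR_subset : NSet G (NR G Y K) ⊆ K :=
  fun _ ⟨hv, _, hu, huv⟩ => by_contra fun hvK => hv (mem_NR_of_adj hu huv hvK)

theorem disjoint_NR_left (hKY : Disjoint K Y) : Disjoint (NR G Y K) Y := by
  refine Set.disjoint_left.2 fun y hyR hy => hyR.2 ⟨y, hy, .nil, fun x hx => ?_⟩
  rw [SimpleGraph.Walk.support_nil, List.mem_singleton] at hx
  exact hx ▸ Set.disjoint_right.1 hKY hy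

theorem IsSeparator.disjoint_right (hK : IsSeparator G X Y K) : Disjoint K Y :=
  Set.disjoint_left.2 fun _ hv hvY => hK.1 hv (Or.inr hvY)

theorem IsSeparator.subset_NR (hK : IsSeparator G X Y K) : X ⊆ NR G Y K := by
  refine fun x hx => ⟨fun hxK => hK.1 hxK (Or.inl hx), fun ⟨y, hy, w, hw⟩ => ?_⟩
  obtain ⟨v, hv, hvK⟩ := hK.2 x hx y hy w.reverse
  exact hw v (by simpa using hv) hvK

theorem IsSeparator.subset_NR_of_subset_NSet {S : Set V} (hK : IsSeparator G X Y K)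
    (hKS : Disjoint K S) (hS : S ⊆ NSet G X) : S ⊆ NR G Y K := by
  intro s hs
  obtain ⟨-, x, hx, hxs⟩ := hS hs
  exact mem_NR_of_adj (hK.subset_NR hx) hxs (Set.disjoint_right.1 hKS hs)

theorem sepLE_NSet_of_NR_subset {T : Set V} (hT : NR G Y K ⊆ T) (hTY : Disjoint T Y) :
    SepLE G Y K (NSet G T) := by
  refine fun v hv => ⟨fun hvN => Set.disjoint_left.1 disjoint_NSet_self hvN (hT hv), ?_⟩
  rintro ⟨y, hy, w, hw⟩
  obtain ⟨u, hu, huN⟩ := w.reverse.exists_mem_support_NSet (hT hv) (Set.disjoint_right.1 hTY hy)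
  exact hw u (by simpa using hu) huN

theorem IsMinimalSeparator.eq_NSet_NR (hK : IsMinimalSeparator G X Y K) :
    K = NSet G (NR G Y K) := by
  refine subset_antisymm (fun k hk => ?_) NSet_NR_subset
  obtain ⟨x, hx, y, hy, w, hw⟩ :
      ∃ x ∈ X, ∃ y ∈ Y, ∃ w : G.Walk x y, ∀ v ∈ w.support, v ∉ K \ {k} := by
    by_contra! hsep
    exact hK.2 (K \ {k}) (Set.sdiff_singleton_ssubset.2 hk) ⟨Set.sdiff_subset.trans hK.1.1, hsep⟩
  obtain ⟨v, hvw, hv⟩ := w.exists_mem_support_NSet (hK.1.subset_NR hx)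
    (Set.disjoint_right.1 (disjoint_NR_left hK.1.disjoint_right) hy)
  obtain rfl : v = k := by_contra fun hvk => hw v hvw ⟨NSet_NR_subset hv, hvk⟩
  exact hv

theorem IsImportantSeparator.NR_eq_of_sepLE {C : Set V} (hK : IsImportantSeparator G X Y K)
    (hC : IsSeparator G X Y C) (hle : SepLE G Y K C) (hcard : C.ncard ≤ K.ncard) :
    NR G Y K = NR G Y C :=
  by_contra fun hne => hK.2 ⟨C, hC, ⟨hle, hne⟩, hcard⟩

end NR

section Witness

variable {G : SimpleGraph V} {X Y S K : Set V}

theorem IsWitness.ncard_le {C : Set V} (hK : IsWitness G X Y S K) (hC : IsSeparator G X Y C)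
    (hCS : Disjoint C S) : K.ncard ≤ C.ncard := by
  have hminK : minSepSize G X Y ≤ K.ncard := Nat.sInf_le ⟨K, hK.1, rfl⟩
  have hminC : minSepSize G X Y ≤ C.ncard := Nat.sInf_le ⟨C, hC, rfl⟩
  have hCE : CE G X Y S ≤ excess G X Y C := Nat.sInf_le ⟨C, hC, hCS, rfl⟩
  have hexcess := hK.2.2
  unfold excess at hCE hexcess
  omega

theorem IsImportantWitness.eq [Finite V] {K' : Set V} (hS : S ⊆ NSet G X)
    (hK : IsImportantWitness G X Y S K) (hK' : IsImportantWitness G X Y S K') : K = K' := by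
  obtain ⟨hKw, hKi⟩ := hK
  obtain ⟨hK'w, hK'i⟩ := hK'
  have hKR : K = NSet G (NR G Y K) := hKi.1.eq_NSet_NR
  have hK'R : K' = NSet G (NR G Y K') := hK'i.1.eq_NSet_NR
  set R := NR G Y K
  set R' := NR G Y K'
  have hRY : Disjoint (R ∪ R') Y := Set.disjoint_union_left.2
    ⟨disjoint_NR_left hKw.1.disjoint_right, disjoint_NR_left hK'w.1.disjoint_right⟩
  have hKK'Y : Disjoint (K ∪ K') Y :=
    Set.disjoint_union_left.2 ⟨hKw.1.disjoint_right, hK'w.1.disjoint_right⟩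
  have hNR : NSet G R ∪ NSet G R' ⊆ K ∪ K' :=
    Set.union_subset_union NSet_NR_subset NSet_NR_subset
  have hsep_union : IsSeparator G X Y (NSet G (R ∪ R')) :=
    isSeparator_NSet (hKw.1.subset_NR.trans Set.subset_union_left) hRY
      (hKK'Y.mono_left (NSet_union_subset.trans hNR))
  have hsep_inter : IsSeparator G X Y (NSet G (R ∩ R')) :=
    isSeparator_NSet (Set.subset_inter hKw.1.subset_NR hK'w.1.subset_NR)
      (hRY.mono_left (Set.inter_subset_left.trans Set.subset_union_left))
      (hKK'Y.mono_left (NSet_inter_subset.trans hNR))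
  have hinter_S : Disjoint (NSet G (R ∩ R')) S := disjoint_NSet_self.mono_right <|
    Set.subset_inter (hKw.1.subset_NR_of_subset_NSet hKw.2.1 hS)
      (hK'w.1.subset_NR_of_subset_NSet hK'w.2.1 hS)
  have hsubmod := ncard_NSet_union_add_ncard_NSet_inter_le G R R'
  rw [← hKR, ← hK'R] at hsubmod
  have hK_le := hKw.ncard_le hsep_inter hinter_S
  have hK'_le := hK'w.ncard_le hsep_inter hinter_S
  have hR := hKi.NR_eq_of_sepLE hsep_union
    (sepLE_NSet_of_NR_subset Set.subset_union_left hRY) (by omega)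
  have hR' := hK'i.NR_eq_of_sepLE hsep_union
    (sepLE_NSet_of_NR_subset Set.subset_union_right hRY) (by omega)
  exact hKR.trans ((congrArg (NSet G) (hR.trans hR'.symm)).trans hK'R.symm)

end Witness

namespace IsCompoundWitness

variable {G : SimpleGraph V} {X Y S K : Set V} {A rest : List (Set V)}

theorem ne_nil (h : IsCompoundWitness X Y G A K) : A ≠ [] := by
  cases h <;> simp

theorem head_subset_NSet (h : IsCompoundWitness X Y G (S :: rest) K) : S ⊆ NSet G X := by
  cases h <;> assumption

theorem disjoint_biUnion_tail (h : IsCompoundWitness X Y G (S :: rest) K) :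
    Disjoint (⋃ T ∈ rest, T) (NSet G X) := by
  cases h with
  | base => simp
  | step _ _ _ _ _ _ _ _ _ hrest => exact Set.disjoint_iUnion₂_left.2 hrest

theorem biUnion_nonempty (h : IsCompoundWitness X Y G A K) : (⋃ T ∈ A, T).Nonempty := by
  cases h with
  | base _ _ _ hS => simpa using hS
  | step _ _ _ _ _ hS => exact hS.mono (Set.subset_biUnion_of_mem List.mem_cons_self)

theorem exists_tail (h : IsCompoundWitness X Y G (S :: rest) K) (hrest : rest ≠ []) :
    ∃ K₁, IsImportantWitness G X Y S K₁ ∧ IsCompoundWitness X Y (PrGraph G X Y K₁) rest K := by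
  cases h with
  | base => exact absurd rfl hrest
  | step _ _ _ _ K₁ _ _ _ _ _ hK₁ h => exact ⟨K₁, hK₁, h⟩

theorem biUnion_tail_eq_empty_iff (h : IsCompoundWitness X Y G (S :: rest) K) :
    (⋃ T ∈ rest, T) = ∅ ↔ rest = [] := by
  refine ⟨fun hempty => by_contra fun hrest => ?_, fun hrest => by simp [hrest]⟩
  obtain ⟨K₁, -, h'⟩ := h.exists_tail hrest
  exact h'.biUnion_nonempty.ne_empty hempty

end IsCompoundWitness

theorem compoundWitness_attribute_unique_of_union_eq_general
    {V : Type*} [Fintype V] (G : SimpleGraph V) (X Y : Set V)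
    (attr1 attr2 : List (Set V))
    (K1 K2 : Set V)
    (h1 : IsCompoundWitness X Y G attr1 K1)
    (h2 : IsCompoundWitness X Y G attr2 K2)
    (hunion : (⋃ S ∈ attr1, S) = ⋃ S ∈ attr2, S) :
    attr1 = attr2 := by
  induction attr1 generalizing G attr2 K1 K2 with
  | nil => exact absurd rfl h1.ne_nil
  | cons S rest ih =>
    obtain _ | ⟨S', rest'⟩ := attr2
    · exact absurd rfl h2.ne_nil
    simp only [List.mem_cons, Set.iUnion_iUnion_eq_or_left] at hunion
    obtain ⟨rfl, htail⟩ := Set.eq_and_eq_of_union_eq_union h1.head_subset_NSet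
      h2.head_subset_NSet h1.disjoint_biUnion_tail h2.disjoint_biUnion_tail hunion
    have hnil : rest = [] ↔ rest' = [] := by
      rw [← h1.biUnion_tail_eq_empty_iff, ← h2.biUnion_tail_eq_empty_iff, htail]
    rcases eq_or_ne rest [] with rfl | hrest
    · rw [hnil.1 rfl]
    obtain ⟨L, hL, h1'⟩ := h1.exists_tail hrest
    obtain ⟨L', hL', h2'⟩ := h2.exists_tail (mt hnil.2 hrest)
    obtain rfl := hL.eq h1.head_subset_NSet hL'
    rw [ih _ _ _ _ h1' h2' htail]

/-- Let `G` be an `X`–`Y` normalized graph.  If `(S1,…,Sr)`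
and `(S1',…,Sq')` are both attributes of compound witnesses w.r.t. `X`, `Y` in
`G` and `S1 ∪ … ∪ Sr = S1' ∪ … ∪ Sq'`, then the two sequences coincide. -/
theorem compoundWitness_attribute_unique_of_union_eq
    {V : Type*} [Fintype V] (G : SimpleGraph V) (X Y : Set V)
    (hXY : Disjoint X Y) (hnorm : Normalized G X Y)
    (attr1 attr2 : List (Set V))
    (hdisj1 : attr1.Pairwise (fun A B => Disjoint A B))
    (hne1 : ∀ S ∈ attr1, S.Nonempty)
    (hdisj2 : attr2.Pairwise (fun A B => Disjoint A B))
    (hne2 : ∀ S ∈ attr2, S.Nonempty)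
    (K1 K2 : Set V)
    (h1 : IsCompoundWitness X Y G attr1 K1)
    (h2 : IsCompoundWitness X Y G attr2 K2)
    (hunion : (⋃ S ∈ attr1, S) = ⋃ S ∈ attr2, S) :
    attr1 = attr2 :=
  compoundWitness_attribute_unique_of_union_eq_general G X Y attr1 attr2 K1 K2 h1 h2 hunion
end
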